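/- arXiv:1902.06607 — 4 statements merged into one kernel-verified Lean document; each statement's English description precedes it below -/
import Mathlib

section
/- Let Q = k_q[x₁,…,xₙ] be a skew polynomial ring. A homogeneous element f ∈ Q (with respect to the standard grading with deg x_i = 1) is normal if and only if all monomials x^I appearing with nonzero coefficient in f have the same normalizing automorphism, i.e. there exist scalars β₁,…,βₙ ∈ k* with f x_j = β_j x_j f for all j. -/
/-!
The ordered monomials `x^I = x₁^{I₁} ⋯ xₙ^{Iₙ}` form a basis of `k_q[x₁,…,xₙ]` in which `x^I x^J`
is a unit multiple of `x^{I+J}`. They span because `xᵢ x^I` is a unit multiple of `x^{I+eᵢ}`, and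
they are independent because `xᵢ ↦ (e_J ↦ (∏_{l<i} q_{il}^{J_l}) e_{J+eᵢ})` is a representation
on the commutative polynomial ring, sending `x^I · e₀` to a unit multiple of `e_I`.

In such a basis the largest exponents of a product add up, for any monomial order. If `f ≠ 0` is
normal with automorphism `σ`, then `σ(x_j) f = f x_j`, and comparing the largest and the smallest
exponents (lexicographically) of both sides shows that `σ(x_j)` is a multiple of `x_j`.
Conversely, if `f x_j = β_j x_j f` for all `j`, the rescaling `x_j ↦ β_j x_j` normalizes `f`.
-/

noncomputable section

/-- The skew-commutation relations defining the skew polynomial ring. -/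
def skewRel (k : Type*) [Field k] {n : ℕ} (q : Fin n → Fin n → kˣ) :
    FreeAlgebra k (Fin n) → FreeAlgebra k (Fin n) → Prop :=
  fun a b => ∃ i j : Fin n, a = FreeAlgebra.ι k i * FreeAlgebra.ι k j ∧
    b = (q i j : k) • (FreeAlgebra.ι k j * FreeAlgebra.ι k i)

/-- The skew polynomial ring `k_q[x₁,…,xₙ]`. -/
abbrev SkewPoly (k : Type*) [Field k] {n : ℕ} (q : Fin n → Fin n → kˣ) : Type _ :=
  RingQuot (skewRel k q)

/-- The variables `x i` of the skew polynomial ring. -/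
def skewVar (k : Type*) [Field k] {n : ℕ} (q : Fin n → Fin n → kˣ) (i : Fin n) :
    SkewPoly k q :=
  RingQuot.mkAlgHom k (skewRel k q) (FreeAlgebra.ι k i)

/-- The span of the words of length `d` in the variables: the homogeneous component of
internal degree `d` of the skew polynomial ring (deg xᵢ = 1). -/
def wordSpan (k : Type*) [Field k] {n : ℕ} (q : Fin n → Fin n → kˣ) (d : ℕ) :
    Submodule k (SkewPoly k q) :=
  Submodule.span k
    {m : SkewPoly k q | ∃ w : List (Fin n), w.length = d ∧ m = (w.map (skewVar k q)).prod}

open Finsupp (single)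
open Module

namespace Module.Basis

variable {k A M : Type*} [CommRing k] [Semiring A] [Algebra k A] [AddCommMonoid M]

def IsTwistedMonoid (b : Basis M k A) : Prop :=
  ∀ I J, ∃ u : kˣ, b I * b J = u • b (I + J)

namespace IsTwistedMonoid

variable {b : Basis M k A}

theorem reindex {M' : Type*} [AddCommMonoid M'] (hb : b.IsTwistedMonoid) (e : M ≃ M')
    (he : ∀ I J, e (I + J) = e I + e J) : (b.reindex e).IsTwistedMonoid := fun I J => by
  have hsymm : e.symm (I + J) = e.symm I + e.symm J :=
    e.injective (by rw [he, Equiv.apply_symm_apply, Equiv.apply_symm_apply, Equiv.apply_symm_apply])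
  simpa only [Basis.reindex_apply, hsymm] using hb (e.symm I) (e.symm J)

theorem repr_mul (hb : b.IsTwistedMonoid) (x y : A) :
    ∃ u : M → M → kˣ, b.repr (x * y) = ∑ I ∈ (b.repr x).support, ∑ J ∈ (b.repr y).support,
      single (I + J) (b.repr x I * b.repr y J * u I J) := by
  choose u hu using hb
  refine ⟨u, ?_⟩
  conv_lhs => rw [← b.linearCombination_repr x, ← b.linearCombination_repr y]
  simp only [Finsupp.linearCombination_apply, Finsupp.sum, Finset.sum_mul, Finset.mul_sum,
    smul_mul_smul, hu, Units.smul_def, smul_smul, map_sum, map_smul, Basis.repr_self,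
    Finsupp.smul_single, smul_eq_mul, mul_one]
  exact Finset.sum_comm

theorem exists_add_eq_of_mem_support_mul (hb : b.IsTwistedMonoid) {x y : A} {K : M}
    (hK : K ∈ (b.repr (x * y)).support) :
    ∃ I ∈ (b.repr x).support, ∃ J ∈ (b.repr y).support, I + J = K := by
  classical
  obtain ⟨u, h⟩ := hb.repr_mul x y
  rw [h] at hK
  obtain ⟨I, hI, hK⟩ := Finset.mem_biUnion.mp (Finsupp.support_finsetSum hK)
  obtain ⟨J, hJ, hK⟩ := Finset.mem_biUnion.mp (Finsupp.support_finsetSum hK)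
  exact ⟨I, hI, J, hJ, (Finset.mem_singleton.mp (Finsupp.support_single_subset hK)).symm⟩

variable [IsDomain k] [LinearOrder M] [IsOrderedCancelAddMonoid M]

theorem max'_add_max'_mem_support_mul (hb : b.IsTwistedMonoid) {x y : A}
    (hx : (b.repr x).support.Nonempty) (hy : (b.repr y).support.Nonempty) :
    (b.repr x).support.max' hx + (b.repr y).support.max' hy ∈ (b.repr (x * y)).support := by
  set I₀ := (b.repr x).support.max' hx
  set J₀ := (b.repr y).support.max' hy
  obtain ⟨u, h⟩ := hb.repr_mul x y
  rw [Finsupp.mem_support_iff, h, Finsupp.finsetSum_apply,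
    Finset.sum_eq_single_of_mem I₀ (Finset.max'_mem _ _), Finsupp.finsetSum_apply,
    Finset.sum_eq_single_of_mem J₀ (Finset.max'_mem _ _), Finsupp.single_eq_same]
  · exact mul_ne_zero (mul_ne_zero (Finsupp.mem_support_iff.mp (Finset.max'_mem _ _))
      (Finsupp.mem_support_iff.mp (Finset.max'_mem _ _))) (Units.ne_zero _)
  · intro J _ hJ
    exact Finsupp.single_eq_of_ne (add_left_cancel_iff.not.mpr (Ne.symm hJ))
  · intro I hI hI₀
    rw [Finsupp.finsetSum_apply]
    refine Finset.sum_eq_zero fun J hJ => Finsupp.single_eq_of_ne (ne_of_lt ?_).symm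
    exact add_lt_add_of_lt_of_le (lt_of_le_of_ne (Finset.le_max' _ _ hI) hI₀)
      (Finset.le_max' _ _ hJ)

theorem le_of_mem_support_of_mul_eq (hb : b.IsTwistedMonoid) {f g : A} {m : M} (hf : f ≠ 0)
    (h : g * f = f * b m) : ∀ I ∈ (b.repr g).support, I ≤ m := by
  intro I hI
  have hg : (b.repr g).support.Nonempty := ⟨I, hI⟩
  have hf' : (b.repr f).support.Nonempty := by simpa using hf
  obtain ⟨S, hS, J, hJ, hSJ⟩ :=
    hb.exists_add_eq_of_mem_support_mul (h ▸ hb.max'_add_max'_mem_support_mul hg hf')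
  rw [b.repr_self, Finsupp.support_single _ one_ne_zero, Finset.mem_singleton] at hJ
  subst hJ
  have hlead : (b.repr g).support.max' hg + (b.repr f).support.max' hf' ≤
      J + (b.repr f).support.max' hf' := by
    rw [← hSJ, add_comm J]
    gcongr
    exact Finset.le_max' _ _ hS
  exact (Finset.le_max' _ _ hI).trans (le_of_add_le_add_right hlead)

theorem exists_eq_smul_of_mul_eq (hb : b.IsTwistedMonoid) {f g : A} {m : M} (hf : f ≠ 0)
    (h : g * f = f * b m) : ∃ c : k, g = c • b m := by
  have hupper := hb.le_of_mem_support_of_mul_eq hf h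
  have hlower := (hb.reindex OrderDual.toDual fun _ _ => rfl).le_of_mem_support_of_mul_eq
    (m := OrderDual.toDual m) hf (by simpa using h)
  obtain ⟨c, hc⟩ := Finsupp.support_subset_singleton'.mp fun I hI => Finset.mem_singleton.mpr
    (le_antisymm (hupper I hI) (hlower (OrderDual.toDual I) (by simpa using hI)))
  exact ⟨c, by rw [← b.linearCombination_repr g, hc, Finsupp.linearCombination_single]⟩

end IsTwistedMonoid
end Module.Basis

section UnitShift

variable {G R W ι : Type*} [Monoid G] [Monoid R] [MulAction G W] [MulAction R W]
  [SMulCommClass R G W]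

theorem exists_list_prod_pow_smul_eq (r : ι → R) (b : (ι →₀ ℕ) → W)
    (hr : ∀ i J, ∃ u : G, r i • b J = u • b (J + single i 1)) (L : List ι) (I J : ι →₀ ℕ) :
    ∃ u : G, (L.map fun i => r i ^ I i).prod • b J =
      u • b (J + (L.map fun i => single i (I i)).sum) := by
  have hpow : ∀ i m J, ∃ u : G, r i ^ m • b J = u • b (J + single i m) := by
    intro i m
    induction m with
    | zero => exact fun J => ⟨1, by simp⟩
    | succ m ih =>
      intro J
      obtain ⟨u, hu⟩ := hr i J
      obtain ⟨v, hv⟩ := ih (J + single i 1)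
      refine ⟨u * v, ?_⟩
      rw [pow_succ, mul_smul, hu, smul_comm, hv, smul_smul, add_assoc, ← Finsupp.single_add,
        add_comm 1 m]
  induction L generalizing J with
  | nil => exact ⟨1, by simp⟩
  | cons i L ih =>
    obtain ⟨u, hu⟩ := ih J
    obtain ⟨v, hv⟩ := hpow i (I i) (J + (L.map fun i => single i (I i)).sum)
    refine ⟨u * v, ?_⟩
    rw [List.map_cons, List.prod_cons, mul_smul, hu, smul_comm, hv, smul_smul, List.map_cons,
      List.sum_cons, add_assoc, add_comm _ (single i (I i))]

end UnitShift

theorem Finsupp.sum_map_finRange_single {M : Type*} [AddCommMonoid M] {n : ℕ} (f : Fin n →₀ M) :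
    ((List.finRange n).map fun i => single i (f i)).sum = f := by
  rw [← Fin.sum_univ_def, Finsupp.univ_sum_single]

namespace SkewPoly

variable {k : Type*} [Field k] {n : ℕ} {q : Fin n → Fin n → kˣ}

theorem skewVar_mul_skewVar (i j : Fin n) :
    skewVar k q i * skewVar k q j = (q i j : k) • (skewVar k q j * skewVar k q i) := by
  simpa only [skewVar, map_mul, map_smul] using
    RingQuot.mkAlgHom_rel k (show skewRel k q _ _ from ⟨i, j, rfl, rfl⟩)

theorem skewVar_mul_pow (i j : Fin n) (m : ℕ) :
    skewVar k q i * skewVar k q j ^ m =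
      ((q i j : k) ^ m) • (skewVar k q j ^ m * skewVar k q i) := by
  induction m with
  | zero => simp
  | succ m ih =>
    rw [pow_succ, ← mul_assoc, ih, smul_mul_assoc, mul_assoc, skewVar_mul_skewVar, mul_smul_comm,
      smul_smul, ← mul_assoc, ← pow_succ, ← pow_succ]

theorem induction_on {P : SkewPoly k q → Prop} (a : SkewPoly k q)
    (grade0 : ∀ r, P (algebraMap k _ r)) (grade1 : ∀ i, P (skewVar k q i))
    (add : ∀ a b, P a → P b → P (a + b)) (mul : ∀ a b, P a → P b → P (a * b)) : P a := by
  obtain ⟨x, rfl⟩ := RingQuot.mkAlgHom_surjective k (skewRel k q) a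
  induction x using FreeAlgebra.induction with
  | grade0 r => simpa only [AlgHom.commutes] using grade0 r
  | grade1 i => exact grade1 i
  | mul x y hx hy => simpa only [map_mul] using mul _ _ hx hy
  | add x y hx hy => simpa only [map_add] using add _ _ hx hy

theorem algHom_ext {A : Type*} [Semiring A] [Algebra k A] {F G : SkewPoly k q →ₐ[k] A}
    (h : ∀ i, F (skewVar k q i) = G (skewVar k q i)) : F = G :=
  RingQuot.ringQuot_ext' k F G (FreeAlgebra.hom_ext (funext h))

def scale (c : Fin n → kˣ) : SkewPoly k q →ₐ[k] SkewPoly k q :=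
  RingQuot.liftAlgHom k ⟨FreeAlgebra.lift k fun i => (c i : k) • skewVar k q i, by
    rintro _ _ ⟨i, j, rfl, rfl⟩
    simp only [map_mul, map_smul, FreeAlgebra.lift_ι_apply]
    rw [smul_mul_smul_comm, smul_mul_smul_comm, skewVar_mul_skewVar, smul_comm,
      mul_comm (c i : k)]⟩

theorem scale_skewVar (c : Fin n → kˣ) (i : Fin n) :
    scale c (skewVar k q i) = (c i : k) • skewVar k q i := by
  rw [skewVar, scale, RingQuot.liftAlgHom_mkAlgHom_apply, FreeAlgebra.lift_ι_apply]
  rfl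

theorem scale_comp_scale_inv (c : Fin n → kˣ) :
    (scale (q := q) c).comp (scale c⁻¹) = AlgHom.id k _ :=
  algHom_ext fun i => by
    rw [AlgHom.comp_apply, scale_skewVar, map_smul, scale_skewVar, smul_smul, Pi.inv_apply,
      ← Units.val_mul, inv_mul_cancel, Units.val_one, one_smul, AlgHom.id_apply]

def scaleEquiv (c : Fin n → kˣ) : SkewPoly k q ≃ₐ[k] SkewPoly k q :=
  AlgEquiv.ofAlgHom (scale c) (scale c⁻¹) (scale_comp_scale_inv c)
    (by simpa only [inv_inv] using scale_comp_scale_inv (q := q) c⁻¹)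

theorem mul_eq_scale_mul {f : SkewPoly k q} {c : Fin n → kˣ}
    (hc : ∀ j, f * skewVar k q j = (c j : k) • (skewVar k q j * f)) (g : SkewPoly k q) :
    f * g = scale c g * f := by
  induction g using induction_on with
  | grade0 r => rw [AlgHom.commutes, Algebra.commutes]
  | grade1 j => rw [hc, scale_skewVar, smul_mul_assoc]
  | add a b ha hb => rw [mul_add, ha, hb, map_add, add_mul]
  | mul a b ha hb => rw [← mul_assoc, ha, mul_assoc, hb, map_mul, mul_assoc]

def monomial (I : Fin n →₀ ℕ) : SkewPoly k q :=
  ((List.finRange n).map fun j => skewVar k q j ^ I j).prod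

theorem monomial_zero : monomial (q := q) 0 = 1 := by
  simp [monomial]

theorem monomial_single (i : Fin n) : monomial (single i 1) = skewVar k q i := by
  classical
  rw [monomial, List.prod_map_eq_pow_single i _ fun j hj _ => by
    rw [Finsupp.single_eq_of_ne hj, pow_zero], List.count_finRange, pow_one,
    Finsupp.single_eq_same, pow_one]

theorem skewVar_mul_list_prod {i : Fin n} {L : List (Fin n)} (hi : i ∈ L) (hL : L.Nodup)
    (I : Fin n →₀ ℕ) :
    ∃ u : kˣ, skewVar k q i * (L.map fun j => skewVar k q j ^ I j).prod =
      u • (L.map fun j => skewVar k q j ^ (I + single i 1 : Fin n →₀ ℕ) j).prod := by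
  induction L with
  | nil => cases hi
  | cons j L ih =>
    rw [List.nodup_cons] at hL
    simp only [List.map_cons, List.prod_cons]
    by_cases hij : i = j
    · subst hij
      refine ⟨1, ?_⟩
      have hrest : L.map (fun l => skewVar k q l ^ (I + single i 1 : Fin n →₀ ℕ) l) =
          L.map (fun l => skewVar k q l ^ I l) := List.map_congr_left fun l hl => by
        rw [Finsupp.add_apply, Finsupp.single_eq_of_ne (ne_of_mem_of_not_mem hl hL.1), add_zero]
      rw [hrest, Finsupp.add_apply, Finsupp.single_eq_same, pow_succ', mul_assoc, one_smul]
    · obtain ⟨u, hu⟩ := ih (List.mem_of_ne_of_mem hij hi) hL.2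
      refine ⟨q i j ^ I j * u, ?_⟩
      rw [← mul_assoc, skewVar_mul_pow, smul_mul_assoc, mul_assoc, hu, mul_smul_comm,
        Finsupp.add_apply, Finsupp.single_eq_of_ne (Ne.symm hij), add_zero, Units.smul_def,
        Units.smul_def, smul_smul, Units.val_mul, Units.val_pow_eq_pow_val]

theorem skewVar_mul_monomial (i : Fin n) (I : Fin n →₀ ℕ) :
    ∃ u : kˣ, skewVar k q i * monomial I = u • monomial (I + single i 1) :=
  skewVar_mul_list_prod (List.mem_finRange i) (List.nodup_finRange n) I

theorem exists_monomial_mul_monomial (I J : Fin n →₀ ℕ) :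
    ∃ u : kˣ, monomial (q := q) I * monomial J = u • monomial (I + J) := by
  obtain ⟨u, hu⟩ := exists_list_prod_pow_smul_eq (G := kˣ) (skewVar k q) monomial
    (fun i J => skewVar_mul_monomial (q := q) i J) (List.finRange n) I J
  rw [Finsupp.sum_map_finRange_single, add_comm, smul_eq_mul] at hu
  exact ⟨u, hu⟩

theorem span_monomial : Submodule.span k (Set.range (monomial (q := q))) = ⊤ := by
  set S := Submodule.span k (Set.range (monomial (q := q)))
  have hmul : ∀ a, ∀ s ∈ S, a * s ∈ S := by
    intro a
    induction a using induction_on with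
    | grade0 r => exact fun s hs => by rw [← Algebra.smul_def]; exact S.smul_mem r hs
    | grade1 i =>
      intro s hs
      induction hs using Submodule.span_induction with
      | mem _ hs =>
        obtain ⟨I, rfl⟩ := hs
        obtain ⟨u, hu⟩ := skewVar_mul_monomial (q := q) i I
        exact hu ▸ S.smul_of_tower_mem u (Submodule.subset_span ⟨_, rfl⟩)
      | zero => simp
      | add x y _ _ hx hy => rw [mul_add]; exact S.add_mem hx hy
      | smul c x _ hx => rw [mul_smul_comm]; exact S.smul_mem c hx
    | add a b ha hb => exact fun s hs => by rw [add_mul]; exact S.add_mem (ha s hs) (hb s hs)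
    | mul a b ha hb => exact fun s hs => by rw [mul_assoc]; exact ha _ (hb s hs)
  refine eq_top_iff.mpr fun a _ => ?_
  simpa using hmul a _ (Submodule.subset_span ⟨0, monomial_zero⟩)

-- To reach its slot in the ordered monomial `e_J`, `xᵢ` has to pass the `x_l` with `l < i`.
def shiftCoeff (q : Fin n → Fin n → kˣ) (i : Fin n) (J : Fin n →₀ ℕ) : kˣ :=
  ∏ l ∈ Finset.Iio i, q i l ^ J l

theorem shiftCoeff_add (i : Fin n) (J K : Fin n →₀ ℕ) :
    shiftCoeff q i (J + K) = shiftCoeff q i J * shiftCoeff q i K := by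
  simp only [shiftCoeff, Finsupp.add_apply, pow_add, Finset.prod_mul_distrib]

theorem shiftCoeff_single (i j : Fin n) :
    shiftCoeff q i (single j 1) = if j < i then q i j else 1 := by
  classical
  simp only [shiftCoeff, Finsupp.single_apply, pow_ite, pow_one, pow_zero, Finset.prod_ite_eq,
    Finset.mem_Iio]

theorem shiftCoeff_single_eq_mul (hq1 : ∀ i, q i i = 1) (hq2 : ∀ i j, q i j = (q j i)⁻¹)
    (i j : Fin n) :
    shiftCoeff q i (single j 1) = q i j * shiftCoeff q j (single i 1) := by
  rw [shiftCoeff_single, shiftCoeff_single]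
  rcases lt_trichotomy i j with h | rfl | h
  · rw [if_neg h.not_gt, if_pos h, hq2, inv_mul_cancel]
  · rw [if_neg (lt_irrefl i), hq1, one_mul]
  · rw [if_pos h, if_neg h.not_gt, mul_one]

def shiftOp (q : Fin n → Fin n → kˣ) (i : Fin n) : Module.End k ((Fin n →₀ ℕ) →₀ k) :=
  Finsupp.linearCombination k fun J => single (J + single i 1) (shiftCoeff q i J : k)

theorem shiftOp_single (i : Fin n) (J : Fin n →₀ ℕ) (a : k) :
    shiftOp q i (single J a) = single (J + single i 1) (a * shiftCoeff q i J) := by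
  rw [shiftOp, Finsupp.linearCombination_single, Finsupp.smul_single, smul_eq_mul]

theorem shiftOp_mul_shiftOp (hq1 : ∀ i, q i i = 1) (hq2 : ∀ i j, q i j = (q j i)⁻¹)
    (i j : Fin n) : shiftOp q i * shiftOp q j = (q i j : k) • (shiftOp q j * shiftOp q i) := by
  refine Finsupp.lhom_ext fun J a => ?_
  simp only [Module.End.mul_apply, LinearMap.smul_apply, shiftOp_single, Finsupp.smul_single,
    smul_eq_mul, shiftCoeff_add, shiftCoeff_single_eq_mul hq1 hq2 i j, add_right_comm J]
  push_cast
  ring_nf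

def shiftRep (hq1 : ∀ i, q i i = 1) (hq2 : ∀ i j, q i j = (q j i)⁻¹) :
    SkewPoly k q →ₐ[k] Module.End k ((Fin n →₀ ℕ) →₀ k) :=
  RingQuot.liftAlgHom k ⟨FreeAlgebra.lift k (shiftOp q), by
    rintro _ _ ⟨i, j, rfl, rfl⟩
    simp only [map_mul, map_smul, FreeAlgebra.lift_ι_apply]
    exact shiftOp_mul_shiftOp hq1 hq2 i j⟩

theorem shiftRep_skewVar (hq1 : ∀ i, q i i = 1) (hq2 : ∀ i j, q i j = (q j i)⁻¹) (i : Fin n) :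
    shiftRep hq1 hq2 (skewVar k q i) = shiftOp q i := by
  rw [skewVar, shiftRep, RingQuot.liftAlgHom_mkAlgHom_apply, FreeAlgebra.lift_ι_apply]

theorem exists_shiftRep_monomial_single_zero (hq1 : ∀ i, q i i = 1)
    (hq2 : ∀ i j, q i j = (q j i)⁻¹) (I : Fin n →₀ ℕ) :
    ∃ u : kˣ, shiftRep hq1 hq2 (monomial I) (single 0 1) = u • single I 1 := by
  have hshift : ∀ i J, ∃ u : kˣ, shiftOp q i • single J (1 : k) = u • single (J + single i 1) 1 :=
    fun i J => ⟨shiftCoeff q i J, by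
      rw [Module.End.smul_def, shiftOp_single, Units.smul_def, Finsupp.smul_single, smul_eq_mul,
        one_mul, mul_one]⟩
  obtain ⟨u, hu⟩ := exists_list_prod_pow_smul_eq (shiftOp q) (fun J => single J (1 : k)) hshift
    (List.finRange n) I 0
  rw [Finsupp.sum_map_finRange_single, zero_add] at hu
  refine ⟨u, ?_⟩
  rw [monomial, map_list_prod, List.map_map]
  simpa only [Function.comp_def, map_pow, shiftRep_skewVar, Module.End.smul_def] using hu

theorem linearIndependent_monomial (hq1 : ∀ i, q i i = 1) (hq2 : ∀ i j, q i j = (q j i)⁻¹) :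
    LinearIndependent k (monomial (q := q)) := by
  choose u hu using exists_shiftRep_monomial_single_zero hq1 hq2
  refine LinearIndependent.of_comp
    (LinearMap.applyₗ (single 0 1) ∘ₗ (shiftRep hq1 hq2).toLinearMap) ?_
  convert Finsupp.basisSingleOne.linearIndependent.units_smul u
  ext1 I
  simp [hu]

def monomialBasis (hq1 : ∀ i, q i i = 1) (hq2 : ∀ i j, q i j = (q j i)⁻¹) :
    Basis (Fin n →₀ ℕ) k (SkewPoly k q) :=
  Basis.mk (linearIndependent_monomial hq1 hq2) span_monomial.ge

theorem monomialBasis_apply (hq1 : ∀ i, q i i = 1) (hq2 : ∀ i j, q i j = (q j i)⁻¹)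
    (I : Fin n →₀ ℕ) : monomialBasis hq1 hq2 I = monomial I :=
  Basis.mk_apply _ _ I

theorem isTwistedMonoid_monomialBasis (hq1 : ∀ i, q i i = 1)
    (hq2 : ∀ i j, q i j = (q j i)⁻¹) : (monomialBasis hq1 hq2).IsTwistedMonoid := by
  simpa only [Basis.IsTwistedMonoid, monomialBasis_apply] using exists_monomial_mul_monomial

theorem skewVar_ne_zero (hq1 : ∀ i, q i i = 1) (hq2 : ∀ i j, q i j = (q j i)⁻¹) (i : Fin n) :
    skewVar k q i ≠ 0 := by
  simpa only [monomialBasis_apply, monomial_single] using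
    (monomialBasis hq1 hq2).ne_zero (single i 1)

theorem exists_eq_smul_skewVar_of_mul_eq (hq1 : ∀ i, q i i = 1)
    (hq2 : ∀ i j, q i j = (q j i)⁻¹) {f g : SkewPoly k q} {j : Fin n} (hf : f ≠ 0)
    (h : g * f = f * skewVar k q j) : ∃ c : k, g = c • skewVar k q j := by
  have hb := (isTwistedMonoid_monomialBasis hq1 hq2).reindex toLex fun _ _ => rfl
  simpa only [Basis.reindex_apply, toLex_symm_eq, ofLex_toLex, monomialBasis_apply,
    monomial_single] using hb.exists_eq_smul_of_mul_eq (m := toLex (single j 1)) hf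
    (by simpa only [Basis.reindex_apply, toLex_symm_eq, ofLex_toLex, monomialBasis_apply,
      monomial_single] using h)

end SkewPoly

theorem skewPoly_homogeneous_normal_iff_general {k : Type*} [Field k] {n : ℕ}
    (q : Fin n → Fin n → kˣ)
    (hq1 : ∀ i : Fin n, q i i = 1)
    (hq2 : ∀ i j : Fin n, q i j = (q j i)⁻¹)
    (f : SkewPoly k q) :
    (∃ σ : SkewPoly k q ≃ₐ[k] SkewPoly k q, ∀ g : SkewPoly k q, f * g = σ g * f) ↔
    (∃ β : Fin n → kˣ, ∀ j : Fin n,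
      f * skewVar k q j = (β j : k) • (skewVar k q j * f)) := by
  constructor
  · rintro ⟨σ, hσ⟩
    rcases eq_or_ne f 0 with rfl | hf
    · exact ⟨1, by simp⟩
    choose c hc using fun j =>
      SkewPoly.exists_eq_smul_skewVar_of_mul_eq hq1 hq2 hf (hσ (skewVar k q j)).symm
    have hc0 (j : Fin n) : c j ≠ 0 := fun h0 => SkewPoly.skewVar_ne_zero hq1 hq2 j
      (σ.injective (by rw [hc j, h0, zero_smul, map_zero]))
    exact ⟨fun j => Units.mk0 (c j) (hc0 j), fun j => by
      rw [hσ, hc j, smul_mul_assoc, Units.val_mk0]⟩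
  · rintro ⟨β, hβ⟩
    exact ⟨SkewPoly.scaleEquiv β, SkewPoly.mul_eq_scale_mul hβ⟩

/-- A homogeneous element f of the skew polynomial ring Q = k_q[x₁,…,xₙ]
(standard grading, deg xᵢ = 1) is normal (i.e. admits a normalizing algebra automorphism σ
with f·g = σ(g)·f for all g) if and only if there exist scalars β₁,…,βₙ ∈ kˣ with
f·xⱼ = βⱼ·xⱼ·f for all j. -/
theorem skewPoly_homogeneous_normal_iff {k : Type*} [Field k] {n : ℕ}
    (q : Fin n → Fin n → kˣ)
    (hq1 : ∀ i : Fin n, q i i = 1)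
    (hq2 : ∀ i j : Fin n, q i j = (q j i)⁻¹)
    (d : ℕ) (f : SkewPoly k q) (hf : f ∈ wordSpan k q d) :
    (∃ σ : SkewPoly k q ≃ₐ[k] SkewPoly k q, ∀ g : SkewPoly k q, f * g = σ g * f) ↔
    (∃ β : Fin n → kˣ, ∀ j : Fin n,
      f * skewVar k q j = (β j : k) • (skewVar k q j * f)) :=
  skewPoly_homogeneous_normal_iff_general q hq1 hq2 f
end
end

section
/- Let Q be a skew polynomial ring with its associated skew bicharacter χ on the group G generated by the normalizing automorphisms of the variables, grading Q by G. If f ∈ Q is a homogeneous normal element, then χ(x^I, x^J) = 1 for all monomials x^I, x^J in the support of f; that is, any two monomials appearing in a normal element commute with each other. -/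
noncomputable section

/-- The ordered monomial x^I = x₁^{i₁}⋯xₙ^{iₙ}. -/
def skewMonomial (k : Type*) [Field k] {n : ℕ} (q : Fin n → Fin n → kˣ)
    (I : Fin n → ℕ) : SkewPoly k q :=
  (List.ofFn (fun i => skewVar k q i ^ I i)).prod

/-!
`Q` acts on `k[X₁, …, Xₙ]` with `xᵢ` acting as `Xᵢ · Tᵢ`, where `Tᵢ` is the diagonal
automorphism `Xⱼ ↦ tᵢⱼ Xⱼ`, `tᵢⱼ = qᵢⱼ` for `i < j` and `tᵢⱼ = 1` otherwise; the relations of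
`Q` hold because `tᵢⱼ = qᵢⱼ tⱼᵢ`. In this action `x^I` sends `X^K` to a nonzero multiple of
`X^(K+I)`. If `x^I f = f b`, apply both sides to `1`: the left side is supported on
`I + supp f`, the right side is `f` applied to `p = b · 1`. Comparing lexicographically largest
and smallest exponents forces `p` to be a multiple of `X^I`, and comparing coefficients then
shows that `x^I x^J` and `x^J x^I` agree on `1` for every `J ∈ supp f`. As
`x^I x^J = χ(I, J) x^J x^I` in `Q`, this forces `χ(I, J) = 1`.
-/

open MvPolynomial

section ScalarCommutation

variable {R A : Type*} [CommSemiring R] [Semiring A] [Algebra R A]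

theorem mul_pow_eq_smul_of_mul_eq_smul {a b : A} {c : R} (h : a * b = c • (b * a)) (n : ℕ) :
    a * b ^ n = c ^ n • (b ^ n * a) := by
  induction n with
  | zero => simp
  | succ n ih =>
    rw [pow_succ, ← mul_assoc, ih, smul_mul_assoc, mul_assoc, h, mul_smul_comm, smul_smul,
      ← mul_assoc, pow_succ]

theorem pow_mul_eq_smul_of_mul_eq_smul {a b : A} {c : R} (h : a * b = c • (b * a)) (m : ℕ) :
    a ^ m * b = c ^ m • (b * a ^ m) := by
  induction m with
  | zero => simp
  | succ m ih =>
    rw [pow_succ, mul_assoc, h, mul_smul_comm, ← mul_assoc, ih, smul_mul_assoc, smul_smul,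
      mul_assoc, pow_succ', mul_comm c]

theorem pow_mul_pow_eq_smul_of_mul_eq_smul {a b : A} {c : R} (h : a * b = c • (b * a))
    (m n : ℕ) : a ^ m * b ^ n = c ^ (m * n) • (b ^ n * a ^ m) := by
  rw [mul_pow_eq_smul_of_mul_eq_smul (pow_mul_eq_smul_of_mul_eq_smul h m), pow_mul]

theorem mul_prod_ofFn_eq_smul {n : ℕ} {a : A} {b : Fin n → A} {c : Fin n → R}
    (h : ∀ i, a * b i = c i • (b i * a)) :
    a * (List.ofFn b).prod = (∏ i, c i) • ((List.ofFn b).prod * a) := by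
  induction n with
  | zero => simp
  | succ n ih =>
    rw [List.ofFn_succ, List.prod_cons, Fin.prod_univ_succ, ← mul_assoc, h, smul_mul_assoc,
      mul_assoc, ih fun i => h i.succ, mul_smul_comm, smul_smul, ← mul_assoc]

theorem prod_ofFn_mul_eq_smul {n : ℕ} {a : Fin n → A} {b : A} {c : Fin n → R}
    (h : ∀ i, a i * b = c i • (b * a i)) :
    (List.ofFn a).prod * b = (∏ i, c i) • (b * (List.ofFn a).prod) := by
  induction n with
  | zero => simp
  | succ n ih =>
    rw [List.ofFn_succ, List.prod_cons, Fin.prod_univ_succ, mul_assoc, ih fun i => h i.succ,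
      mul_smul_comm, ← mul_assoc, h, smul_mul_assoc, smul_smul, mul_assoc, mul_comm (c 0)]

end ScalarCommutation

section MonomialShift

variable {σ k : Type*} [CommSemiring k]

def IsMonomialShift (L : Module.End k (MvPolynomial σ k)) (v : σ →₀ ℕ) : Prop :=
  ∃ φ : (σ →₀ ℕ) → kˣ, ∀ K b, L (monomial K b) = monomial (K + v) (φ K * b)

namespace IsMonomialShift

variable {L L' : Module.End k (MvPolynomial σ k)} {v v' : σ →₀ ℕ}

theorem one : IsMonomialShift (1 : Module.End k (MvPolynomial σ k)) 0 :=
  ⟨1, by simp⟩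

theorem mul (hL : IsMonomialShift L v) (hL' : IsMonomialShift L' v') :
    IsMonomialShift (L * L') (v + v') := by
  obtain ⟨φ, hφ⟩ := hL
  obtain ⟨φ', hφ'⟩ := hL'
  refine ⟨fun K => φ (K + v') * φ' K, fun K b => ?_⟩
  rw [Module.End.mul_apply, hφ', hφ, add_assoc, add_comm v', Units.val_mul, mul_assoc]

theorem pow (hL : IsMonomialShift L v) (m : ℕ) : IsMonomialShift (L ^ m) (m • v) := by
  induction m with
  | zero => simpa using one
  | succ m ih => simpa [pow_succ, succ_nsmul] using ih.mul hL

theorem prod_ofFn {n : ℕ} {L : Fin n → Module.End k (MvPolynomial σ k)} {v : Fin n → σ →₀ ℕ}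
    (h : ∀ i, IsMonomialShift (L i) (v i)) : IsMonomialShift (List.ofFn L).prod (∑ i, v i) := by
  induction n with
  | zero => simpa using one
  | succ n ih => simpa [List.ofFn_succ, Fin.sum_univ_succ] using (h 0).mul (ih fun i => h i.succ)

theorem apply_one_ne_zero [Nontrivial k] (hL : IsMonomialShift L v) : L 1 ≠ 0 := by
  obtain ⟨φ, hφ⟩ := hL
  rw [← C_1, ← monomial_zero', hφ, Ne, monomial_eq_zero, mul_one]
  exact (φ 0).ne_zero

end IsMonomialShift

end MonomialShift

section SumMonomial

variable {ι σ k : Type*} [CommSemiring k] {e : ι → σ →₀ ℕ}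

theorem coeff_sum_monomial_add_of_injective (he : Function.Injective e) (s : Finset ι)
    (v : σ →₀ ℕ) (u : ι → k) {j : ι} (hj : j ∈ s) :
    coeff (e j + v) (∑ i ∈ s, monomial (e i + v) (u i)) = u j := by
  classical
  rw [coeff_sum, Finset.sum_eq_single_of_mem j hj fun i _ hij => ?_, coeff_monomial, if_pos rfl]
  rw [coeff_monomial, if_neg fun h => hij (he (add_right_cancel h))]

theorem le_of_sum_monomial_eq_sum_sum {M : Type*} [AddCommMonoid M] [LinearOrder M]
    [IsOrderedCancelAddMonoid M] (ord : (σ →₀ ℕ) ≃+ M) (he : Function.Injective e)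
    {A : Finset ι} (hA : A.Nonempty) {B : Finset (σ →₀ ℕ)} {v : σ →₀ ℕ} {u : ι → k}
    {w : ι → (σ →₀ ℕ) → k} (hw : ∀ a ∈ A, ∀ b ∈ B, w a b ≠ 0)
    (h : ∑ a ∈ A, monomial (e a + v) (u a) = ∑ a ∈ A, ∑ b ∈ B, monomial (e a + b) (w a b)) :
    ∀ b ∈ B, ord b ≤ ord v := by
  classical
  intro b hb
  obtain ⟨a₀, ha₀, ha₀max⟩ := A.exists_max_image (fun a => ord (e a)) hA
  obtain ⟨b₀, hb₀, hb₀max⟩ := B.exists_max_image ord ⟨b, hb⟩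
  have hunique : ∀ a ∈ A, ∀ b ∈ B, e a + b = e a₀ + b₀ → a = a₀ ∧ b = b₀ := by
    intro a ha b hb hab
    have := (add_eq_add_iff_eq_and_eq (ha₀max a ha) (hb₀max b hb)).1
      (by simpa only [map_add] using congrArg ord hab)
    exact ⟨he (ord.injective this.1), ord.injective this.2⟩
  have hcoeff : coeff (e a₀ + b₀) (∑ a ∈ A, ∑ b ∈ B, monomial (e a + b) (w a b)) = w a₀ b₀ := by
    simp only [coeff_sum, coeff_monomial]
    rw [Finset.sum_eq_single_of_mem a₀ ha₀ fun a ha hne => Finset.sum_eq_zero fun b hb =>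
        if_neg fun hab => hne (hunique a ha b hb hab).1,
      Finset.sum_eq_single_of_mem b₀ hb₀ fun b hb hne =>
        if_neg fun hab => hne (hunique a₀ ha₀ b hb hab).2, if_pos rfl]
  obtain ⟨a, ha, hva⟩ : ∃ a ∈ A, e a + v = e a₀ + b₀ := by
    by_contra! hne
    apply hw a₀ ha₀ b₀ hb₀
    rw [← hcoeff, ← h, coeff_sum]
    exact Finset.sum_eq_zero fun a ha => by rw [coeff_monomial, if_neg (hne a ha)]
  have : ord b₀ + ord (e a) ≤ ord v + ord (e a) := by
    calc ord b₀ + ord (e a) ≤ ord b₀ + ord (e a₀) := add_le_add le_rfl (ha₀max a ha)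
      _ = ord v + ord (e a) := by rw [← map_add, ← map_add, add_comm b₀, ← hva, add_comm]
  exact (hb₀max b hb).trans (le_of_add_le_add_right this)

theorem support_subset_singleton_of_sum_monomial_eq_sum_sum (he : Function.Injective e)
    {A : Finset ι} (hA : A.Nonempty) {B : Finset (σ →₀ ℕ)} {v : σ →₀ ℕ} {u : ι → k}
    {w : ι → (σ →₀ ℕ) → k} (hw : ∀ a ∈ A, ∀ b ∈ B, w a b ≠ 0)
    (h : ∑ a ∈ A, monomial (e a + v) (u a) = ∑ a ∈ A, ∑ b ∈ B, monomial (e a + b) (w a b)) :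
    B ⊆ {v} := by
  -- any linear order on `σ` will do: its lexicographic order bounds `B` above, the dual below
  let : LinearOrder σ := IsWellOrder.linearOrder WellOrderingRel
  let lex : (σ →₀ ℕ) ≃+ Lex (σ →₀ ℕ) := ⟨toLex, toLex_add⟩
  have hmax := le_of_sum_monomial_eq_sum_sum lex he hA hw h
  have hmin := le_of_sum_monomial_eq_sum_sum (lex.trans ⟨OrderDual.toDual, toDual_add⟩)
    he hA hw h
  exact fun b hb => Finset.mem_singleton.2 (lex.injective (le_antisymm (hmax b hb) (hmin b hb)))

end SumMonomial

section Normal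

variable {ι σ k : Type*} [CommRing k] {L : ι → Module.End k (MvPolynomial σ k)}
  {e : ι → σ →₀ ℕ} {φ : ι → (σ →₀ ℕ) → kˣ}

theorem sum_smul_apply_monomial
    (hφ : ∀ j K b, L j (monomial K b) = monomial (K + e j) (φ j K * b))
    (s : Finset ι) (c : ι → k) (K : σ →₀ ℕ) (b : k) :
    (∑ j ∈ s, c j • L j) (monomial K b) = ∑ j ∈ s, monomial (e j + K) (c j * (φ j K * b)) := by
  simp only [LinearMap.sum_apply, LinearMap.smul_apply, hφ, smul_monomial, smul_eq_mul, add_comm K]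

variable [IsDomain k]

theorem eq_monomial_of_sum_monomial_eq_sum_smul_apply (he : Function.Injective e)
    (hφ : ∀ j K b, L j (monomial K b) = monomial (K + e j) (φ j K * b))
    {s : Finset ι} (hs : s.Nonempty) {c : ι → k} (hc : ∀ j ∈ s, c j ≠ 0) {v : σ →₀ ℕ}
    {u : ι → k} {p : MvPolynomial σ k}
    (h : ∑ j ∈ s, monomial (e j + v) (u j) = (∑ j ∈ s, c j • L j) p) :
    p = monomial v (p.coeff v) := by
  classical
  have hsupp : p.support ⊆ {v} := by
    refine support_subset_singleton_of_sum_monomial_eq_sum_sum he hs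
      (w := fun j K => c j * (φ j K * p.coeff K)) (fun j hj K hK => ?_) (h.trans ?_)
    · exact mul_ne_zero (hc j hj) (mul_ne_zero (φ j K).ne_zero (mem_support_iff.1 hK))
    · conv_lhs => rw [p.as_sum]
      simp only [map_sum, sum_smul_apply_monomial hφ]
      exact Finset.sum_comm
  ext K
  rw [coeff_monomial]
  split_ifs with hK
  · rw [hK]
  · exact notMem_support_iff.1 fun hK' => hK (Finset.mem_singleton.1 (hsupp hK')).symm

theorem mul_apply_one_comm_of_mul_sum_eq_sum_mul (he : Function.Injective e)
    (hL : ∀ i, IsMonomialShift (L i) (e i)) {s : Finset ι} {c : ι → k}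
    (hc : ∀ j ∈ s, c j ≠ 0) {i : ι} (hi : i ∈ s) {B : Module.End k (MvPolynomial σ k)}
    (h : L i * ∑ j ∈ s, c j • L j = (∑ j ∈ s, c j • L j) * B) {j : ι} (hj : j ∈ s) :
    (L i * L j) 1 = (L j * L i) 1 := by
  choose φ hφ using hL
  have hone : (∑ j ∈ s, c j • L j) 1 = ∑ j ∈ s, monomial (e j) (c j * φ j 0) := by
    simp only [← C_1, ← monomial_zero', sum_smul_apply_monomial hφ, add_zero, mul_one]
  have hnormal : ∑ j ∈ s, monomial (e j + e i) (φ i (e j) * (c j * φ j 0)) =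
      (∑ j ∈ s, c j • L j) (B 1) := by
    simpa only [Module.End.mul_apply, hone, map_sum, hφ] using congrArg (· 1) h
  set β := (B 1).coeff (e i)
  rw [eq_monomial_of_sum_monomial_eq_sum_smul_apply he hφ ⟨i, hi⟩ hc hnormal,
    sum_smul_apply_monomial hφ] at hnormal
  have hcoeff (j : ι) (hj : j ∈ s) : φ i (e j) * (c j * φ j 0) = c j * (φ j (e i) * β) := by
    simpa only [coeff_sum_monomial_add_of_injective he _ _ _ hj] using
      congrArg (coeff (e j + e i)) hnormal
  have hβ : β = φ i 0 := by
    refine mul_left_cancel₀ (mul_ne_zero (hc i hi) (φ i (e i)).ne_zero) ?_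
    linear_combination (hcoeff i hi).symm
  have hij : (φ i (e j) * φ j 0 : k) = φ j (e i) * φ i 0 := by
    refine mul_left_cancel₀ (hc j hj) ?_
    linear_combination hcoeff j hj + c j * φ j (e i) * hβ
  simp only [Module.End.mul_apply, ← C_1, ← monomial_zero', hφ, zero_add, mul_one]
  rw [add_comm, hij]

end Normal

section SkewPoly

variable {k : Type*} [Field k] {n : ℕ} (q : Fin n → Fin n → kˣ)

theorem skewVar_mul_skewVar (i j : Fin n) :
    skewVar k q i * skewVar k q j = (q i j : k) • (skewVar k q j * skewVar k q i) := by
  simpa only [skewVar, map_mul, map_smul] using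
    RingQuot.mkAlgHom_rel k (s := skewRel k q) ⟨i, j, rfl, rfl⟩

theorem skewMonomial_mul_skewMonomial (I J : Fin n → ℕ) :
    skewMonomial k q I * skewMonomial k q J =
      (∏ i, ∏ j, (q i j : k) ^ (I i * J j)) • (skewMonomial k q J * skewMonomial k q I) :=
  prod_ofFn_mul_eq_smul fun i => mul_prod_ofFn_eq_smul fun j =>
    pow_mul_pow_eq_smul_of_mul_eq_smul (skewVar_mul_skewVar q i j) _ _

end SkewPoly

section SkewRep

variable {k : Type*} [Field k] {n : ℕ} (q : Fin n → Fin n → kˣ)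

def skewTwist (i j : Fin n) : kˣ := if i < j then q i j else 1

theorem skewTwist_eq_mul (hq1 : ∀ i : Fin n, q i i = 1) (hq2 : ∀ i j : Fin n, q i j = (q j i)⁻¹)
    (i j : Fin n) : skewTwist q i j = q i j * skewTwist q j i := by
  rcases lt_trichotomy i j with h | rfl | h
  · simp [skewTwist, h, h.not_gt]
  · simp [skewTwist, hq1]
  · simp [skewTwist, h, h.not_gt, hq2 i j]

def twistFactor (i : Fin n) (K : Fin n →₀ ℕ) : kˣ := K.prod fun j e => skewTwist q i j ^ e

theorem twistFactor_add_single (i j : Fin n) (K : Fin n →₀ ℕ) :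
    twistFactor q i (K + Finsupp.single j 1) = twistFactor q i K * skewTwist q i j := by
  rw [twistFactor, Finsupp.prod_add_index' (fun _ => pow_zero _) (fun _ _ _ => pow_add _ _ _)]
  simp [twistFactor]

def skewVarOp (i : Fin n) : Module.End k (MvPolynomial (Fin n) k) :=
  LinearMap.mulLeft k (X i) ∘ₗ (aeval fun j => C (skewTwist q i j : k) * X j).toLinearMap

theorem skewVarOp_monomial (i : Fin n) (K : Fin n →₀ ℕ) (b : k) :
    skewVarOp q i (monomial K b) =
      monomial (K + Finsupp.single i 1) (twistFactor q i K * b) := by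
  have hT : (aeval fun j => C (skewTwist q i j : k) * X j) (monomial K b) =
      monomial K (twistFactor q i K * b) := by
    rw [aeval_monomial, twistFactor, Finsupp.prod, Finsupp.prod]
    simp only [mul_pow, Finset.prod_mul_distrib, ← map_pow, ← map_prod, prod_X_pow_eq_monomial]
    rw [algebraMap_eq, ← mul_assoc, ← map_mul, C_mul_monomial, mul_one, mul_comm]
    push_cast
    rfl
  rw [skewVarOp, LinearMap.comp_apply, AlgHom.toLinearMap_apply, hT, LinearMap.mulLeft_apply, X,
    monomial_mul, one_mul, add_comm]

variable {q}

theorem skewVarOp_mul_skewVarOp (hq1 : ∀ i : Fin n, q i i = 1)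
    (hq2 : ∀ i j : Fin n, q i j = (q j i)⁻¹) (i j : Fin n) :
    skewVarOp q i * skewVarOp q j = (q i j : k) • (skewVarOp q j * skewVarOp q i) := by
  refine LinearMap.ext fun p => ?_
  induction p using MvPolynomial.induction_on' with
  | add p p' hp hp' => simp only [map_add, hp, hp']
  | monomial K b =>
    simp only [Module.End.mul_apply, LinearMap.smul_apply, skewVarOp_monomial, smul_monomial,
      twistFactor_add_single, skewTwist_eq_mul q hq1 hq2 i j, add_right_comm _ (Finsupp.single i 1)]
    congr 1
    push_cast
    ring

variable (k q) in
def skewRep (hq1 : ∀ i : Fin n, q i i = 1) (hq2 : ∀ i j : Fin n, q i j = (q j i)⁻¹) :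
    SkewPoly k q →ₐ[k] Module.End k (MvPolynomial (Fin n) k) :=
  RingQuot.liftAlgHom k ⟨FreeAlgebra.lift k (skewVarOp q), by
    rintro _ _ ⟨i, j, rfl, rfl⟩
    simpa only [map_mul, map_smul, FreeAlgebra.lift_ι_apply] using
      skewVarOp_mul_skewVarOp hq1 hq2 i j⟩

theorem isMonomialShift_skewVarOp (i : Fin n) :
    IsMonomialShift (skewVarOp q i) (Finsupp.single i 1) :=
  ⟨twistFactor q i, skewVarOp_monomial q i⟩

theorem isMonomialShift_skewRep_skewMonomial (hq1 : ∀ i : Fin n, q i i = 1)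
    (hq2 : ∀ i j : Fin n, q i j = (q j i)⁻¹) (I : Fin n → ℕ) :
    IsMonomialShift (skewRep k q hq1 hq2 (skewMonomial k q I))
      (Finsupp.equivFunOnFinite.symm I) := by
  have hvar (i : Fin n) : skewRep k q hq1 hq2 (skewVar k q i) = skewVarOp q i := by
    rw [skewVar, skewRep, RingQuot.liftAlgHom_mkAlgHom_apply, FreeAlgebra.lift_ι_apply]
  rw [skewMonomial, map_list_prod, List.map_ofFn, Finsupp.equivFunOnFinite_symm_eq_sum]
  refine IsMonomialShift.prod_ofFn fun i => ?_
  simpa [hvar] using (isMonomialShift_skewVarOp i).pow (I i)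

end SkewRep

theorem skewPoly_normal_support_monomials_commute_general {k : Type*} [Field k] {n : ℕ}
    (q : Fin n → Fin n → kˣ)
    (hq1 : ∀ i : Fin n, q i i = 1)
    (hq2 : ∀ i j : Fin n, q i j = (q j i)⁻¹)
    (f : SkewPoly k q)
    (s : Finset (Fin n → ℕ)) (c : (Fin n → ℕ) → k)
    (hc : ∀ I ∈ s, c I ≠ 0)
    (hrep : f = ∑ I ∈ s, c I • skewMonomial k q I)
    -- f is normal: fQ = Qf
    (hfn₂ : ∀ a : SkewPoly k q, ∃ b : SkewPoly k q, a * f = f * b) :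
    ∀ I ∈ s, ∀ J ∈ s,
      skewMonomial k q I * skewMonomial k q J = skewMonomial k q J * skewMonomial k q I := by
  intro I hI J hJ
  set Φ := skewRep k q hq1 hq2
  have hshift := isMonomialShift_skewRep_skewMonomial hq1 hq2
  obtain ⟨b, hb⟩ := hfn₂ (skewMonomial k q I)
  have hone : Φ (skewMonomial k q I * skewMonomial k q J) 1 =
      Φ (skewMonomial k q J * skewMonomial k q I) 1 := by
    simpa only [map_mul] using mul_apply_one_comm_of_mul_sum_eq_sum_mul
      Finsupp.equivFunOnFinite.symm.injective hshift hc hI (B := Φ b)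
      (by simpa only [hrep, map_mul, map_sum, map_smul] using congrArg Φ hb) hJ
  have hne : Φ (skewMonomial k q J * skewMonomial k q I) 1 ≠ 0 := by
    simpa only [map_mul] using ((hshift J).mul (hshift I)).apply_one_ne_zero
  rw [skewMonomial_mul_skewMonomial, map_smul, LinearMap.smul_apply] at hone
  rw [skewMonomial_mul_skewMonomial, smul_left_injective k hne (hone.trans (one_smul k _).symm),
    one_smul]

/-- If f is a homogeneous normal element of the skew polynomial ring Q,
written f = Σ_{I ∈ s} c_I x^I with all c_I ≠ 0, then any two monomials x^I, x^J appearing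
in f commute with each other (i.e. χ(x^I, x^J) = 1). -/
theorem skewPoly_normal_support_monomials_commute {k : Type*} [Field k] {n : ℕ}
    (q : Fin n → Fin n → kˣ)
    (hq1 : ∀ i : Fin n, q i i = 1)
    (hq2 : ∀ i j : Fin n, q i j = (q j i)⁻¹)
    (d : ℕ) (f : SkewPoly k q)
    (s : Finset (Fin n → ℕ)) (c : (Fin n → ℕ) → k)
    (hc : ∀ I ∈ s, c I ≠ 0)
    (hrep : f = ∑ I ∈ s, c I • skewMonomial k q I)
    -- f is homogeneous of internal degree d
    (hhom : ∀ I ∈ s, (∑ i : Fin n, I i) = d)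
    -- f is normal: fQ = Qf
    (hfn₁ : ∀ a : SkewPoly k q, ∃ b : SkewPoly k q, f * a = b * f)
    (hfn₂ : ∀ a : SkewPoly k q, ∃ b : SkewPoly k q, a * f = f * b) :
    ∀ I ∈ s, ∀ J ∈ s,
      skewMonomial k q I * skewMonomial k q J = skewMonomial k q J * skewMonomial k q I :=
  skewPoly_normal_support_monomials_commute_general q hq1 hq2 f s c hc hrep hfn₂
end
end

section
/- Let A and B be k-algebras and τ : B ⊗ A → A ⊗ B a k-linear map with τ(b ⊗ 1) = 1 ⊗ b and τ(1 ⊗ a) = a ⊗ 1. Define μ_τ = (μ_A ⊗ μ_B)∘(id_A ⊗ τ ⊗ id_B) on A ⊗ B. Then μ_τ is associative if and only if τ ∘ (μ_B ⊗ μ_A) = μ_τ ∘ (τ ⊗ τ) ∘ (id_B ⊗ τ ⊗ id_A) as maps B ⊗ B ⊗ A ⊗ A → A ⊗ B. -/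
open TensorProduct

set_option synthInstance.maxHeartbeats 400000
set_option maxHeartbeats 1000000
noncomputable section

variable {k A B : Type} [Field k]
  [Ring A] [Algebra k A] [Ring B] [Algebra k B]

/-- The twisted multiplication μ_τ = (μ_A ⊗ μ_B) ∘ (id_A ⊗ τ ⊗ id_B) on A ⊗ B. -/
def twistedMul (τ : B ⊗[k] A →ₗ[k] A ⊗[k] B) :
    (A ⊗[k] B) ⊗[k] (A ⊗[k] B) →ₗ[k] A ⊗[k] B :=
  (TensorProduct.map (LinearMap.mul' k A) (LinearMap.mul' k B)) ∘ₗ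
  (TensorProduct.assoc k A A (B ⊗[k] B)).symm.toLinearMap ∘ₗ
  (TensorProduct.map LinearMap.id (TensorProduct.assoc k A B B).toLinearMap) ∘ₗ
  (TensorProduct.map LinearMap.id (TensorProduct.map τ LinearMap.id)) ∘ₗ
  (TensorProduct.map LinearMap.id (TensorProduct.assoc k B A B).symm.toLinearMap) ∘ₗ
  (TensorProduct.assoc k A B (A ⊗[k] B)).toLinearMap

variable (τ : B ⊗[k] A →ₗ[k] A ⊗[k] B)

lemma tm_tmul (a a' : A) (b b' : B) :
    twistedMul τ ((a ⊗ₜ[k] b) ⊗ₜ[k] (a' ⊗ₜ[k] b')) =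
    TensorProduct.map (LinearMap.mulLeft k a) (LinearMap.mulRight k b') (τ (b ⊗ₜ[k] a')) := by
  unfold twistedMul
  simp only [LinearMap.comp_apply, LinearEquiv.coe_coe, assoc_tmul, map_tmul,
    LinearMap.id_coe, id_eq, assoc_symm_tmul]
  generalize τ (b ⊗ₜ[k] a') = t
  induction t using TensorProduct.induction_on with
  | zero => simp
  | tmul x y => simp [LinearMap.mul'_apply]
  | add t₁ t₂ h₁ h₂ => simp only [add_tmul, tmul_add, map_add, h₁, h₂]

lemma tm_one_left (hτ2 : ∀ a : A, τ ((1:B) ⊗ₜ[k] a) = a ⊗ₜ[k] (1:B)) (a : A) (t : A ⊗[k] B) :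
    twistedMul τ ((a ⊗ₜ[k] (1:B)) ⊗ₜ[k] t) =
      TensorProduct.map (LinearMap.mulLeft k a) LinearMap.id t := by
  induction t using TensorProduct.induction_on with
  | zero => simp
  | tmul x y => rw [tm_tmul, hτ2]; simp
  | add t₁ t₂ h₁ h₂ => simp only [tmul_add, map_add, h₁, h₂]

lemma tm_one_right (hτ1 : ∀ b : B, τ (b ⊗ₜ[k] (1:A)) = (1:A) ⊗ₜ[k] b) (b : B) (t : A ⊗[k] B) :
    twistedMul τ (t ⊗ₜ[k] ((1:A) ⊗ₜ[k] b)) =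
      TensorProduct.map LinearMap.id (LinearMap.mulRight k b) t := by
  induction t using TensorProduct.induction_on with
  | zero => simp
  | tmul x y => rw [tm_tmul, hτ1]; simp
  | add t₁ t₂ h₁ h₂ => simp only [add_tmul, map_add, h₁, h₂]

lemma tm_tau (b : B) (a : A) :
    twistedMul τ (((1:A) ⊗ₜ[k] b) ⊗ₜ[k] (a ⊗ₜ[k] (1:B))) = τ (b ⊗ₜ[k] a) := by
  rw [tm_tmul]
  simp [LinearMap.mulLeft_one, LinearMap.mulRight_one]

lemma tm_mixed (hτ2 : ∀ a : A, τ ((1:B) ⊗ₜ[k] a) = a ⊗ₜ[k] (1:B)) (a : A) (b : B) :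
    twistedMul τ ((a ⊗ₜ[k] (1:B)) ⊗ₜ[k] ((1:A) ⊗ₜ[k] b)) = a ⊗ₜ[k] b := by
  rw [tm_tmul, hτ2]; simp

/-- Ψ b a' : on pure tensors x ⊗ y ↦ μ_τ(τ(b⊗x) ⊗ τ(y⊗a')). -/
def psi (b : B) (a' : A) : A ⊗[k] B →ₗ[k] A ⊗[k] B :=
  twistedMul τ ∘ₗ TensorProduct.map τ τ ∘ₗ
    TensorProduct.map (TensorProduct.mk k B A b) ((TensorProduct.mk k B A).flip a')

lemma psi_tmul (b : B) (a' : A) (x : A) (y : B) :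
    psi τ b a' (x ⊗ₜ[k] y) = twistedMul τ (τ (b ⊗ₜ[k] x) ⊗ₜ[k] τ (y ⊗ₜ[k] a')) := by
  simp [psi, TensorProduct.mk_apply]

lemma rhs_apply (b b' : B) (a a' : A) :
    ((twistedMul τ) ∘ₗ
      (TensorProduct.map τ τ) ∘ₗ
      (TensorProduct.assoc k B A (B ⊗[k] A)).symm.toLinearMap ∘ₗ
      (TensorProduct.map LinearMap.id (TensorProduct.assoc k A B A).toLinearMap) ∘ₗ
      (TensorProduct.map LinearMap.id (TensorProduct.map τ LinearMap.id)) ∘ₗ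
      (TensorProduct.map LinearMap.id (TensorProduct.assoc k B A A).symm.toLinearMap) ∘ₗ
      (TensorProduct.assoc k B B (A ⊗[k] A)).toLinearMap)
      ((b ⊗ₜ[k] b') ⊗ₜ[k] (a ⊗ₜ[k] a'))
    = psi τ b a' (τ (b' ⊗ₜ[k] a)) := by
  simp only [LinearMap.comp_apply, LinearEquiv.coe_coe, assoc_tmul, map_tmul,
    LinearMap.id_coe, id_eq, assoc_symm_tmul]
  generalize τ (b' ⊗ₜ[k] a) = t
  induction t using TensorProduct.induction_on with
  | zero => simp [psi]
  | tmul x y =>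
      simp only [assoc_tmul, map_tmul, LinearMap.id_coe, id_eq, assoc_symm_tmul, tmul_add]
      rw [psi_tmul]
  | add t₁ t₂ h₁ h₂ => simp only [add_tmul, tmul_add, map_add, h₁, h₂]

section
variable (hτ1 : ∀ b : B, τ (b ⊗ₜ[k] (1:A)) = (1:A) ⊗ₜ[k] b)
variable (hτ2 : ∀ a : A, τ ((1:B) ⊗ₜ[k] a) = a ⊗ₜ[k] (1:B))
include hτ1 hτ2

lemma psi_right (x : A) (y : B) (s : A ⊗[k] B) :
    TensorProduct.map (LinearMap.mulLeft k x) LinearMap.id (psi τ y (1:A) s) =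
      twistedMul τ ((x ⊗ₜ[k] y) ⊗ₜ[k] s) := by
  induction s using TensorProduct.induction_on with
  | zero => simp
  | tmul u v =>
      rw [psi_tmul, hτ1, tm_one_right τ hτ1, tm_tmul]
      generalize τ (y ⊗ₜ[k] u) = t
      induction t using TensorProduct.induction_on with
      | zero => simp
      | tmul p q => simp
      | add t₁ t₂ h₁ h₂ => simp only [map_add, h₁, h₂]
  | add s₁ s₂ h₁ h₂ => simp only [tmul_add, map_add, h₁, h₂]

lemma psi_left (u : A) (v : B) (t : A ⊗[k] B) :
    TensorProduct.map LinearMap.id (LinearMap.mulRight k v) (psi τ (1:B) u t) =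
      twistedMul τ (t ⊗ₜ[k] (u ⊗ₜ[k] v)) := by
  induction t using TensorProduct.induction_on with
  | zero => simp
  | tmul x y =>
      rw [psi_tmul, hτ2, tm_one_left τ hτ2, tm_tmul]
      generalize τ (y ⊗ₜ[k] u) = t
      induction t using TensorProduct.induction_on with
      | zero => simp
      | tmul p q => simp
      | add t₁ t₂ h₁ h₂ => simp only [map_add, h₁, h₂]
  | add t₁ t₂ h₁ h₂ => simp only [add_tmul, map_add, h₁, h₂]

lemma strip_left (a : A) (t s : A ⊗[k] B) :
    twistedMul τ (twistedMul τ ((a ⊗ₜ[k] (1:B)) ⊗ₜ[k] t) ⊗ₜ[k] s) =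
      twistedMul τ ((a ⊗ₜ[k] (1:B)) ⊗ₜ[k] twistedMul τ (t ⊗ₜ[k] s)) := by
  rw [tm_one_left τ hτ2, tm_one_left τ hτ2]
  induction t using TensorProduct.induction_on with
  | zero => simp
  | tmul x y =>
      induction s using TensorProduct.induction_on with
      | zero => simp
      | tmul u v =>
          simp only [map_tmul, LinearMap.id_coe, id_eq, LinearMap.mulLeft_apply]
          rw [tm_tmul, tm_tmul]
          generalize τ (y ⊗ₜ[k] u) = t
          induction t using TensorProduct.induction_on with
          | zero => simp
          | tmul p q => simp [mul_assoc]
          | add t₁ t₂ h₁ h₂ => simp only [map_add, h₁, h₂]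
      | add s₁ s₂ h₁ h₂ => simp only [tmul_add, map_add, h₁, h₂]
  | add t₁ t₂ h₁ h₂ => simp only [add_tmul, map_add, h₁, h₂]

lemma strip_right (b : B) (t s : A ⊗[k] B) :
    twistedMul τ (t ⊗ₜ[k] twistedMul τ (s ⊗ₜ[k] ((1:A) ⊗ₜ[k] b))) =
      twistedMul τ (twistedMul τ (t ⊗ₜ[k] s) ⊗ₜ[k] ((1:A) ⊗ₜ[k] b)) := by
  rw [tm_one_right τ hτ1, tm_one_right τ hτ1]
  induction t using TensorProduct.induction_on with
  | zero => simp
  | tmul x y =>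
      induction s using TensorProduct.induction_on with
      | zero => simp
      | tmul u v =>
          simp only [map_tmul, LinearMap.id_coe, id_eq, LinearMap.mulRight_apply]
          rw [tm_tmul, tm_tmul]
          generalize τ (y ⊗ₜ[k] u) = t
          induction t using TensorProduct.induction_on with
          | zero => simp
          | tmul p q => simp [mul_assoc]
          | add t₁ t₂ h₁ h₂ => simp only [map_add, h₁, h₂]
      | add s₁ s₂ h₁ h₂ => simp only [map_add, tmul_add, h₁, h₂]
  | add t₁ t₂ h₁ h₂ => simp only [add_tmul, map_add, h₁, h₂]

lemma split_left (a : A) (b : B) (t : A ⊗[k] B) :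
    twistedMul τ ((a ⊗ₜ[k] b) ⊗ₜ[k] t) =
      twistedMul τ ((a ⊗ₜ[k] (1:B)) ⊗ₜ[k] twistedMul τ (((1:A) ⊗ₜ[k] b) ⊗ₜ[k] t)) := by
  rw [tm_one_left τ hτ2]
  induction t using TensorProduct.induction_on with
  | zero => simp
  | tmul x y =>
      rw [tm_tmul, tm_tmul]
      generalize τ (b ⊗ₜ[k] x) = t
      induction t using TensorProduct.induction_on with
      | zero => simp
      | tmul p q => simp
      | add t₁ t₂ h₁ h₂ => simp only [map_add, h₁, h₂]
  | add t₁ t₂ h₁ h₂ => simp only [tmul_add, map_add, h₁, h₂]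

lemma split_right (a : A) (b : B) (t : A ⊗[k] B) :
    twistedMul τ (t ⊗ₜ[k] (a ⊗ₜ[k] b)) =
      twistedMul τ (twistedMul τ (t ⊗ₜ[k] (a ⊗ₜ[k] (1:B))) ⊗ₜ[k] ((1:A) ⊗ₜ[k] b)) := by
  rw [tm_one_right τ hτ1]
  induction t using TensorProduct.induction_on with
  | zero => simp
  | tmul x y =>
      rw [tm_tmul, tm_tmul]
      generalize τ (y ⊗ₜ[k] a) = t
      induction t using TensorProduct.induction_on with
      | zero => simp
      | tmul p q => simp
      | add t₁ t₂ h₁ h₂ => simp only [map_add, h₁, h₂]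
  | add t₁ t₂ h₁ h₂ => simp only [add_tmul, map_add, h₁, h₂]

end

set_option linter.unusedSectionVars false


set_option linter.unusedSectionVars false

/-- For a k-linear map τ : B ⊗ A → A ⊗ B with τ(b ⊗ 1) = 1 ⊗ b and
τ(1 ⊗ a) = a ⊗ 1, the multiplication μ_τ = (μ_A ⊗ μ_B)∘(id_A ⊗ τ ⊗ id_B) on A ⊗ B is
associative if and only if
τ ∘ (μ_B ⊗ μ_A) = μ_τ ∘ (τ ⊗ τ) ∘ (id_B ⊗ τ ⊗ id_A) : B ⊗ B ⊗ A ⊗ A → A ⊗ B. -/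
theorem twistedMul_assoc_iff (τ : B ⊗[k] A →ₗ[k] A ⊗[k] B)
    (hτ1 : ∀ b : B, τ (b ⊗ₜ[k] (1 : A)) = (1 : A) ⊗ₜ[k] b)
    (hτ2 : ∀ a : A, τ ((1 : B) ⊗ₜ[k] a) = a ⊗ₜ[k] (1 : B)) :
    (∀ x y z : A ⊗[k] B,
        twistedMul τ (twistedMul τ (x ⊗ₜ[k] y) ⊗ₜ[k] z) =
          twistedMul τ (x ⊗ₜ[k] twistedMul τ (y ⊗ₜ[k] z))) ↔
    (τ ∘ₗ (TensorProduct.map (LinearMap.mul' k B) (LinearMap.mul' k A))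
      =
      (twistedMul τ) ∘ₗ
      (TensorProduct.map τ τ) ∘ₗ
      (TensorProduct.assoc k B A (B ⊗[k] A)).symm.toLinearMap ∘ₗ
      (TensorProduct.map LinearMap.id (TensorProduct.assoc k A B A).toLinearMap) ∘ₗ
      (TensorProduct.map LinearMap.id (TensorProduct.map τ LinearMap.id)) ∘ₗ
      (TensorProduct.map LinearMap.id (TensorProduct.assoc k B A A).symm.toLinearMap) ∘ₗ
      (TensorProduct.assoc k B B (A ⊗[k] A)).toLinearMap) := by
  constructor
  · intro hA
    apply TensorProduct.ext'
    intro w z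
    induction w using TensorProduct.induction_on with
    | zero => simp
    | add w₁ w₂ h₁ h₂ => simp only [add_tmul, map_add, h₁, h₂]
    | tmul b b' =>
      induction z using TensorProduct.induction_on with
      | zero => simp
      | add z₁ z₂ h₁ h₂ => simp only [tmul_add, map_add, h₁, h₂]
      | tmul a a' =>
        rw [rhs_apply]
        simp only [LinearMap.comp_apply, map_tmul, LinearMap.mul'_apply]
        have key : ∀ t : A ⊗[k] B,
            twistedMul τ (((1:A) ⊗ₜ[k] b) ⊗ₜ[k]
              twistedMul τ (t ⊗ₜ[k] (a' ⊗ₜ[k] (1:B)))) = psi τ b a' t := by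
          intro t
          induction t using TensorProduct.induction_on with
          | zero => simp
          | add t₁ t₂ h₁ h₂ => simp only [add_tmul, tmul_add, map_add, h₁, h₂]
          | tmul x y =>
            rw [psi_tmul]
            conv_lhs => rw [← tm_mixed τ hτ2 x y]
            rw [hA (x ⊗ₜ[k] (1:B)) ((1:A) ⊗ₜ[k] y) (a' ⊗ₜ[k] (1:B))]
            rw [← hA ((1:A) ⊗ₜ[k] b) (x ⊗ₜ[k] (1:B))
              (twistedMul τ (((1:A) ⊗ₜ[k] y) ⊗ₜ[k] (a' ⊗ₜ[k] (1:B))))]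
            rw [tm_tau, tm_tau]
        have e1 : twistedMul τ (((1:A) ⊗ₜ[k] b) ⊗ₜ[k] ((1:A) ⊗ₜ[k] b')) =
            (1:A) ⊗ₜ[k] (b*b') := by
          rw [tm_tmul, hτ1]; simp
        have e2 : twistedMul τ ((a ⊗ₜ[k] (1:B)) ⊗ₜ[k] (a' ⊗ₜ[k] (1:B))) =
            (a*a') ⊗ₜ[k] (1:B) := by
          rw [tm_tmul, hτ2]; simp
        calc τ ((b*b') ⊗ₜ[k] (a*a'))
            = twistedMul τ (((1:A) ⊗ₜ[k] (b*b')) ⊗ₜ[k] ((a*a') ⊗ₜ[k] (1:B))) :=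
              (tm_tau τ _ _).symm
          _ = twistedMul τ (twistedMul τ (((1:A) ⊗ₜ[k] b) ⊗ₜ[k] ((1:A) ⊗ₜ[k] b')) ⊗ₜ[k]
                twistedMul τ ((a ⊗ₜ[k] (1:B)) ⊗ₜ[k] (a' ⊗ₜ[k] (1:B)))) := by rw [e1, e2]
          _ = twistedMul τ (((1:A) ⊗ₜ[k] b) ⊗ₜ[k]
                twistedMul τ (((1:A) ⊗ₜ[k] b') ⊗ₜ[k]
                  twistedMul τ ((a ⊗ₜ[k] (1:B)) ⊗ₜ[k] (a' ⊗ₜ[k] (1:B))))) := hA _ _ _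
          _ = twistedMul τ (((1:A) ⊗ₜ[k] b) ⊗ₜ[k]
                twistedMul τ (twistedMul τ (((1:A) ⊗ₜ[k] b') ⊗ₜ[k] (a ⊗ₜ[k] (1:B))) ⊗ₜ[k]
                  (a' ⊗ₜ[k] (1:B)))) := by
              rw [← hA ((1:A) ⊗ₜ[k] b') (a ⊗ₜ[k] (1:B)) (a' ⊗ₜ[k] (1:B))]
          _ = twistedMul τ (((1:A) ⊗ₜ[k] b) ⊗ₜ[k]
                twistedMul τ (τ (b' ⊗ₜ[k] a) ⊗ₜ[k] (a' ⊗ₜ[k] (1:B)))) := by rw [tm_tau]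
          _ = psi τ b a' (τ (b' ⊗ₜ[k] a)) := key _
  · intro hC
    have key : ∀ (b b' : B) (a a' : A),
        τ ((b*b') ⊗ₜ[k] (a*a')) = psi τ b a' (τ (b' ⊗ₜ[k] a)) := by
      intro b b' a a'
      have h := DFunLike.congr_fun hC ((b ⊗ₜ[k] b') ⊗ₜ[k] (a ⊗ₜ[k] a'))
      rw [rhs_apply] at h
      simpa [LinearMap.mul'_apply] using h
    have hR : ∀ (y b₂ : B) (a₃ : A),
        τ ((y*b₂) ⊗ₜ[k] a₃) = psi τ y (1:A) (τ (b₂ ⊗ₜ[k] a₃)) := by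
      intro y b₂ a₃; have := key y b₂ a₃ 1; rwa [mul_one] at this
    have hL : ∀ (b₁ : B) (a u : A),
        τ (b₁ ⊗ₜ[k] (a*u)) = psi τ (1:B) u (τ (b₁ ⊗ₜ[k] a)) := by
      intro b₁ a u; have := key 1 b₁ a u; rwa [one_mul] at this
    have K1 : ∀ (b₂ : B) (a₃ : A) (t : A ⊗[k] B),
        twistedMul τ ((TensorProduct.map LinearMap.id (LinearMap.mulRight k b₂) t) ⊗ₜ[k]
          (a₃ ⊗ₜ[k] (1:B))) = twistedMul τ (t ⊗ₜ[k] τ (b₂ ⊗ₜ[k] a₃)) := by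
      intro b₂ a₃ t
      induction t using TensorProduct.induction_on with
      | zero => simp
      | add t₁ t₂ h₁ h₂ => simp only [map_add, add_tmul, h₁, h₂]
      | tmul x y =>
        simp only [map_tmul, LinearMap.id_coe, id_eq, LinearMap.mulRight_apply]
        rw [tm_tmul, LinearMap.mulRight_one, hR y b₂ a₃, psi_right τ hτ1 hτ2]
    have K2 : ∀ (b₁ : B) (a₂ : A) (s : A ⊗[k] B),
        twistedMul τ (((1:A) ⊗ₜ[k] b₁) ⊗ₜ[k]
          TensorProduct.map (LinearMap.mulLeft k a₂) LinearMap.id s)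
          = twistedMul τ (τ (b₁ ⊗ₜ[k] a₂) ⊗ₜ[k] s) := by
      intro b₁ a₂ s
      induction s using TensorProduct.induction_on with
      | zero => simp
      | add s₁ s₂ h₁ h₂ => simp only [map_add, tmul_add, h₁, h₂]
      | tmul u v =>
        simp only [map_tmul, LinearMap.id_coe, id_eq, LinearMap.mulLeft_apply]
        rw [tm_tmul, LinearMap.mulLeft_one, hL b₁ a₂ u, psi_left τ hτ1 hτ2]
    have mid : ∀ (b₁ : B) (y : A ⊗[k] B) (a₃ : A),
        twistedMul τ (twistedMul τ (((1:A) ⊗ₜ[k] b₁) ⊗ₜ[k] y) ⊗ₜ[k] (a₃ ⊗ₜ[k] (1:B)))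
          = twistedMul τ (((1:A) ⊗ₜ[k] b₁) ⊗ₜ[k]
              twistedMul τ (y ⊗ₜ[k] (a₃ ⊗ₜ[k] (1:B)))) := by
      intro b₁ y a₃
      induction y using TensorProduct.induction_on with
      | zero => simp
      | add y₁ y₂ h₁ h₂ => simp only [map_add, tmul_add, add_tmul, h₁, h₂]
      | tmul a₂ b₂ =>
        rw [tm_tmul τ (1:A) a₂ b₁ b₂, LinearMap.mulLeft_one, K1 b₂ a₃ (τ (b₁ ⊗ₜ[k] a₂)),
          tm_tmul τ a₂ a₃ b₂ (1:B), LinearMap.mulRight_one, K2 b₁ a₂ (τ (b₂ ⊗ₜ[k] a₃))]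
    have assocL : ∀ (b₁ : B) (y z : A ⊗[k] B),
        twistedMul τ (twistedMul τ (((1:A) ⊗ₜ[k] b₁) ⊗ₜ[k] y) ⊗ₜ[k] z)
          = twistedMul τ (((1:A) ⊗ₜ[k] b₁) ⊗ₜ[k] twistedMul τ (y ⊗ₜ[k] z)) := by
      intro b₁ y z
      induction z using TensorProduct.induction_on with
      | zero => simp
      | add z₁ z₂ h₁ h₂ => simp only [map_add, tmul_add, add_tmul, h₁, h₂]
      | tmul a₃ b₃ =>
        rw [split_right τ hτ1 hτ2 a₃ b₃ (twistedMul τ (((1:A) ⊗ₜ[k] b₁) ⊗ₜ[k] y)),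
          split_right τ hτ1 hτ2 a₃ b₃ y,
          strip_right τ hτ1 hτ2 b₃ ((1:A) ⊗ₜ[k] b₁)
            (twistedMul τ (y ⊗ₜ[k] (a₃ ⊗ₜ[k] (1:B)))),
          mid b₁ y a₃]
    intro x y z
    induction x using TensorProduct.induction_on with
    | zero => simp
    | add x₁ x₂ h₁ h₂ => simp only [map_add, add_tmul, h₁, h₂]
    | tmul a₁ b₁ =>
      rw [split_left τ hτ1 hτ2 a₁ b₁ y,
        split_left τ hτ1 hτ2 a₁ b₁ (twistedMul τ (y ⊗ₜ[k] z)),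
        strip_left τ hτ1 hτ2 a₁ (twistedMul τ (((1:A) ⊗ₜ[k] b₁) ⊗ₜ[k] y)) z,
        assocL b₁ y z]
end
end

section
/- Let A be a DG algebra and z a killable cycle of even degree d ≥ 0 whose class w = [z] ∈ H(A) is regular, i.e. the left annihilator of w in H(A) is zero. Then the inclusion A → A⟨y | ∂y = z⟩ induces an isomorphism H(A)/wH(A) ≅ H(A⟨y⟩). -/
/-!
Writing `E = A ⊕ A·y`, the differential of `E` becomes the mapping cone of right multiplication
by `z`, twisted by the parity involution `ε a = (-1)^|a| a`:
`D (a₁ + a₂ y) = (d a₁ + ε a₂ · z) + (d a₂) y`.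
A cycle `a₁ + a₂ y` thus has `ε a₂` a cycle whose product with `z` is a boundary; regularity of
`[z]` makes `a₂` a boundary, so the cycle is homologous to one of `A`. A cycle of `A` bounds in `E`
exactly when it is `c z` modulo boundaries for some cycle `c`; since `z` is normal,
`H(A)·[z] = [z]·H(A)`.
-/

theorem LinearMap.ext_of_iSup_eq_top {R M N ι : Type*} [Semiring R] [AddCommMonoid M] [Module R M]
    [AddCommMonoid N] [Module R N] {𝒜 : ι → Submodule R M} (h𝒜 : ⨆ i, 𝒜 i = ⊤)
    {f g : M →ₗ[R] N} (hfg : ∀ i, ∀ a ∈ 𝒜 i, f a = g a) : f = g :=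
  LinearMap.eqLocus_eq_top.1 <| eq_top_iff.2 <| h𝒜 ▸ iSup_le fun i a ha => hfg i a ha

section Parity

variable {k A : Type*} [CommRing k] [AddCommGroup A] [Module k A] {𝒜 : ℕ → Submodule k A}
  {ε : A →ₗ[k] A}

theorem parity_parity (h𝒜 : ⨆ m, 𝒜 m = ⊤) (hε : ∀ m, ∀ a ∈ 𝒜 m, ε a = ((-1 : ℤ) ^ m) • a) (a : A) :
    ε (ε a) = a := by
  refine LinearMap.congr_fun (f := ε ∘ₗ ε) (g := LinearMap.id)
    (LinearMap.ext_of_iSup_eq_top h𝒜 fun m b hb => ?_) a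
  simp [hε m b hb, ← mul_smul, ← mul_pow]

theorem differential_parity (h𝒜 : ⨆ m, 𝒜 m = ⊤) (hε : ∀ m, ∀ a ∈ 𝒜 m, ε a = ((-1 : ℤ) ^ m) • a)
    {d : A →ₗ[k] A} (hd0 : ∀ a ∈ 𝒜 0, d a = 0) (hdgr : ∀ m : ℕ, ∀ a ∈ 𝒜 (m + 1), d a ∈ 𝒜 m)
    (a : A) : d (ε a) = -ε (d a) := by
  refine LinearMap.congr_fun (f := d ∘ₗ ε) (g := -(ε ∘ₗ d))
    (LinearMap.ext_of_iSup_eq_top h𝒜 fun m b hb => ?_) a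
  cases m with
  | zero => simp [hε 0 b hb, hd0 b hb]
  | succ m => simp [hε _ b hb, hε m _ (hdgr m b hb), pow_succ]

end Parity

section NormalCycle

variable {k A : Type*} [CommRing k] [Ring A] [Algebra k A] {𝒜 : ℕ → Submodule k A}

theorem mul_eq_mul_of_normal (h𝒜 : ⨆ m, 𝒜 m = ⊤) {n : ℕ} (hn : Even n) {z : A} (σ : A ≃ₐ[k] A)
    (hnormal : ∀ m, ∀ a ∈ 𝒜 m, z * a = ((-1 : ℤ) ^ (m * n)) • (σ a * z)) (b : A) :
    z * b = σ b * z :=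
  LinearMap.congr_fun (f := LinearMap.mulLeft k z) (g := LinearMap.mulRight k z ∘ₗ σ.toLinearMap)
    (LinearMap.ext_of_iSup_eq_top h𝒜 fun m a ha => by
      simp [hnormal m a ha, (hn.mul_left m).neg_one_pow]) b

theorem differential_mul_cycle (h𝒜 : ⨆ m, 𝒜 m = ⊤) {d : A →ₗ[k] A}
    (hleib : ∀ (m : ℕ) (a b : A), a ∈ 𝒜 m → d (a * b) = d a * b + ((-1 : ℤ) ^ m) • (a * d b))
    {z : A} (hz : d z = 0) (a : A) : d (a * z) = d a * z :=
  LinearMap.congr_fun (f := d ∘ₗ LinearMap.mulRight k z) (g := LinearMap.mulRight k z ∘ₗ d)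
    (LinearMap.ext_of_iSup_eq_top h𝒜 fun m b hb => by simp [hleib m b z hb, hz]) a

end NormalCycle

section Cone

variable {k A : Type*} [CommRing k] [Ring A] [Algebra k A] {d ε : A →ₗ[k] A} {z : A}

def coneDifferential (d ε : A →ₗ[k] A) (z : A) (p : A × A) : A × A :=
  (d p.1 + ε p.2 * z, d p.2)

theorem exists_cycle_sub_eq_coneDifferential (hεε : ∀ a, ε (ε a) = a)
    (hdε : ∀ a, d (ε a) = -ε (d a)) (hdz : ∀ a, d (a * z) = d a * z)
    (hreg : ∀ a : A, d a = 0 → (∃ b : A, a * z = d b) → ∃ c : A, a = d c) {p : A × A}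
    (hp : coneDifferential d ε z p = 0) :
    ∃ a : A, d a = 0 ∧ ∃ q : A × A, p - (a, 0) = coneDifferential d ε z q := by
  obtain ⟨a₁, a₂⟩ := p
  obtain ⟨h₁, h₂⟩ : d a₁ + ε a₂ * z = 0 ∧ d a₂ = 0 := Prod.ext_iff.1 hp
  obtain ⟨b, hb⟩ : ∃ b, ε a₂ = d b :=
    hreg _ (by rw [hdε, h₂, map_zero, neg_zero]) ⟨-a₁, by rw [map_neg, eq_neg_of_add_eq_zero_right h₁]⟩
  refine ⟨a₁ + b * z, by rw [map_add, hdz, ← hb, h₁], (0, -ε b), ?_⟩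
  have ha₂ : d (ε b) = -a₂ := by rw [hdε, ← hb, hεε]
  simp [coneDifferential, hεε, ha₂]

theorem exists_coneDifferential_eq_iff (hεε : ∀ a, ε (ε a) = a)
    (hdε : ∀ a, d (ε a) = -ε (d a)) (a : A) :
    (∃ q : A × A, (a, 0) = coneDifferential d ε z q) ↔
      ∃ c : A, d c = 0 ∧ ∃ a' : A, a - c * z = d a' := by
  constructor
  · rintro ⟨⟨u, v⟩, huv⟩
    obtain ⟨rfl, hv⟩ : a = d u + ε v * z ∧ 0 = d v := Prod.ext_iff.1 huv
    exact ⟨ε v, by rw [hdε, ← hv, map_zero, neg_zero], u, add_sub_cancel_right _ _⟩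
  · rintro ⟨c, hc, a', ha'⟩
    refine ⟨(a', ε c), ?_⟩
    simp [coneDifferential, hεε, hdε, hc, ← ha']

end Cone

theorem exists_mul_left_iff_exists_mul_right {k A : Type*} [CommRing k] [Ring A] [Algebra k A]
    {d : A →ₗ[k] A} {z : A} (σ : A ≃ₐ[k] A) (hzσ : ∀ b, z * b = σ b * z)
    (hσd : ∀ a, σ (d a) = d (σ a)) (a : A) :
    (∃ b : A, d b = 0 ∧ ∃ a' : A, a - z * b = d a') ↔
      ∃ c : A, d c = 0 ∧ ∃ a' : A, a - c * z = d a' := by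
  constructor
  · rintro ⟨b, hb, a', ha'⟩
    exact ⟨σ b, by rw [← hσd, hb, map_zero], a', by rwa [← hzσ]⟩
  · rintro ⟨c, hc, a', ha'⟩
    refine ⟨σ.symm c, σ.injective ?_, a', by rwa [hzσ, σ.apply_symm_apply]⟩
    rw [hσd, σ.apply_symm_apply, hc, map_zero]

section Extension

variable {k A E : Type*} [CommRing k] [Ring A] [Algebra k A] [Ring E] [Algebra k E]
  {ι : A →ₐ[k] E} {y : E}

noncomputable def extensionCoords (ι : A →ₐ[k] E) (y : E)
    (hfree : ∀ e : E, ∃! p : A × A, e = ι p.1 + ι p.2 * y) : (A × A) ≃ₗ[k] E :=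
  LinearEquiv.ofBijective (ι.toLinearMap.coprod (LinearMap.mulRight k y ∘ₗ ι.toLinearMap))
    ⟨fun _ _ h => (hfree _).unique rfl h, fun e => (hfree e).exists.imp fun _ hp => hp.symm⟩

@[simp]
theorem extensionCoords_apply (hfree : ∀ e : E, ∃! p : A × A, e = ι p.1 + ι p.2 * y) (p : A × A) :
    extensionCoords ι y hfree p = ι p.1 + ι p.2 * y :=
  rfl

/-- The `𝒜 m` need not be independent, so the sign `(-1)^m` is read off from
`y * ι a = ± ι (σ a) * y`, which freeness of `E` determines. -/
theorem exists_parity_of_free {𝒜 : ℕ → Submodule k A}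
    (hfree : ∀ e : E, ∃! p : A × A, e = ι p.1 + ι p.2 * y) (σ : A ≃ₐ[k] A)
    (hycomm : ∀ m, ∀ a ∈ 𝒜 m, y * ι a = ((-1 : ℤ) ^ m) • (ι (σ a) * y)) :
    ∃ ε : A →ₗ[k] A, ∀ m, ∀ a ∈ 𝒜 m, ε a = ((-1 : ℤ) ^ m) • a := by
  set Φ := extensionCoords ι y hfree
  refine ⟨σ.symm.toLinearMap ∘ₗ LinearMap.snd k A A ∘ₗ Φ.symm.toLinearMap ∘ₗ
    LinearMap.mulLeft k y ∘ₗ ι.toLinearMap, fun m a ha => ?_⟩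
  have hΦ : y * ι a = Φ (0, ((-1 : ℤ) ^ m) • σ a) := by
    simp [Φ, hycomm m a ha, mul_assoc]
  simp [hΦ]

theorem differential_extensionCoords {𝒜 : ℕ → Submodule k A} (h𝒜 : ⨆ m, 𝒜 m = ⊤)
    (hfree : ∀ e : E, ∃! p : A × A, e = ι p.1 + ι p.2 * y) {d ε : A →ₗ[k] A}
    (hε : ∀ m, ∀ a ∈ 𝒜 m, ε a = ((-1 : ℤ) ^ m) • a) {z : A} {D : E →ₗ[k] E}
    (hD : ∀ (m : ℕ) (a₁ a₂ : A), a₂ ∈ 𝒜 m →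
      D (ι a₁ + ι a₂ * y) = ι (d a₁) + ι (d a₂) * y + ((-1 : ℤ) ^ m) • (ι a₂ * ι z))
    (p : A × A) :
    D (extensionCoords ι y hfree p) = extensionCoords ι y hfree (coneDifferential d ε z p) := by
  have hDι (a : A) : D (ι a) = ι (d a) := by simpa using hD 0 a 0 (zero_mem _)
  have hDy : D ∘ₗ LinearMap.mulRight k y ∘ₗ ι.toLinearMap =
      LinearMap.mulRight k y ∘ₗ ι.toLinearMap ∘ₗ d +
        ι.toLinearMap ∘ₗ LinearMap.mulRight k z ∘ₗ ε :=
    LinearMap.ext_of_iSup_eq_top h𝒜 fun m a ha => by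
      have := hD m 0 a ha
      simp only [map_zero, zero_add] at this
      simp [this, hε m a ha, mul_assoc]
  have hDy' := LinearMap.congr_fun hDy p.2
  simp only [LinearMap.comp_apply, LinearMap.add_apply, LinearMap.mulRight_apply,
    AlgHom.toLinearMap_apply, map_mul] at hDy'
  simp [coneDifferential, hDι, hDy']
  abel

end Extension

theorem homology_of_exterior_extension_general
    {k A E : Type} [Field k] [Ring A] [Algebra k A] [Ring E] [Algebra k E]
    -- A is a DG k-algebra:
    (𝒜 : ℕ → Submodule k A) (d : A →ₗ[k] A)
    (hsupA : (⨆ m : ℕ, 𝒜 m) = ⊤)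
    (hd0 : ∀ a ∈ 𝒜 0, d a = 0)
    (hdgr : ∀ m : ℕ, ∀ a ∈ 𝒜 (m + 1), d a ∈ 𝒜 m)
    (hleib : ∀ (m : ℕ) (a b : A), a ∈ 𝒜 m →
      d (a * b) = d a * b + ((-1 : ℤ) ^ m) • (a * d b))
    -- z is a killable cycle of even degree dz with normalizing chain automorphism σ:
    (dz : ℕ) (hdz : Even dz) (z : A) (hzcycle : d z = 0)
    (σ : A ≃ₐ[k] A)
    (hσchain : ∀ a : A, σ (d a) = d (σ a))
    (hnormal : ∀ (m : ℕ), ∀ a ∈ 𝒜 m, z * a = ((-1 : ℤ) ^ (m * dz)) • (σ a * z))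
    -- w = [z] is regular: the left annihilator of w in H(A) is zero
    (hreg : ∀ a : A, d a = 0 → (∃ b : A, a * z = d b) → ∃ c : A, a = d c)
    -- E = A⟨y | ∂y = z⟩ :
    (ι : A →ₐ[k] E) (y : E)
    (hfree : ∀ e : E, ∃! p : A × A, e = ι p.1 + ι p.2 * y)
    (hycomm : ∀ (m : ℕ), ∀ a ∈ 𝒜 m, y * ι a = ((-1 : ℤ) ^ m) • (ι (σ a) * y))
    (D : E →ₗ[k] E)
    (hD : ∀ (m : ℕ) (a₁ a₂ : A), a₂ ∈ 𝒜 m →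
      D (ι a₁ + ι a₂ * y) = ι (d a₁) + ι (d a₂) * y + ((-1 : ℤ) ^ m) • (ι a₂ * ι z)) :
    -- (a) H(A) → H(E) is surjective:
    (∀ e : E, D e = 0 → ∃ a : A, d a = 0 ∧ ∃ e' : E, e - ι a = D e') ∧
    -- (b) the kernel of H(A) → H(E) is w·H(A):
    (∀ a : A, d a = 0 →
      ((∃ e' : E, ι a = D e') ↔ (∃ b : A, d b = 0 ∧ ∃ a' : A, a - z * b = d a'))) := by
  obtain ⟨ε, hε⟩ := exists_parity_of_free hfree σ hycomm
  have hεε := parity_parity hsupA hε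
  have hdε := differential_parity hsupA hε hd0 hdgr
  set Φ := extensionCoords ι y hfree
  have hDΦ : ∀ p, D (Φ p) = Φ (coneDifferential d ε z p) :=
    differential_extensionCoords hsupA hfree hε hD
  have hΦι (a : A) : ι a = Φ (a, 0) := by simp [Φ]
  refine ⟨fun e he => ?_, fun a _ => ?_⟩
  · obtain ⟨p, rfl⟩ := Φ.surjective e
    have hp : coneDifferential d ε z p = 0 := Φ.injective (by rw [← hDΦ, he, map_zero])
    obtain ⟨a, ha, q, hq⟩ := exists_cycle_sub_eq_coneDifferential hεε hdε
      (differential_mul_cycle hsupA hleib hzcycle) hreg hp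
    exact ⟨a, ha, Φ q, by rw [hDΦ, ← hq, map_sub, hΦι]⟩
  · rw [exists_mul_left_iff_exists_mul_right σ (mul_eq_mul_of_normal hsupA hdz σ hnormal) hσchain,
      ← exists_coneDifferential_eq_iff hεε hdε, Φ.surjective.exists, hΦι]
    simp only [hDΦ, Φ.injective.eq_iff]

/-- Let A be a DG algebra and z a killable cycle of even degree dz ≥ 0 whose
homology class w = [z] is regular in H(A), i.e. the left annihilator of w in H(A) is zero.
Then the inclusion A → A⟨y | ∂y = z⟩ induces an isomorphism H(A)/wH(A) ≅ H(A⟨y⟩).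
This canonical isomorphism is expressed by: (a) every cycle of A⟨y⟩ is, modulo boundaries,
the image of a cycle of A (surjectivity of H(A) → H(A⟨y⟩)); and (b) a cycle of A becomes
a boundary in A⟨y⟩ exactly when its class lies in w·H(A) (the kernel of H(A) → H(A⟨y⟩)
is wH(A)). -/
theorem homology_of_exterior_extension
    {k A E : Type} [Field k] [Ring A] [Algebra k A] [Ring E] [Algebra k E]
    -- A is a DG k-algebra:
    (𝒜 : ℕ → Submodule k A) (d : A →ₗ[k] A)
    (hsupA : (⨆ m : ℕ, 𝒜 m) = ⊤)
    (honeA : (1 : A) ∈ 𝒜 0)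
    (hmulA : ∀ (m l : ℕ) (a b : A), a ∈ 𝒜 m → b ∈ 𝒜 l → a * b ∈ 𝒜 (m + l))
    (hd0 : ∀ a ∈ 𝒜 0, d a = 0)
    (hdgr : ∀ m : ℕ, ∀ a ∈ 𝒜 (m + 1), d a ∈ 𝒜 m)
    (hdd : ∀ a : A, d (d a) = 0)
    (hleib : ∀ (m : ℕ) (a b : A), a ∈ 𝒜 m →
      d (a * b) = d a * b + ((-1 : ℤ) ^ m) • (a * d b))
    -- z is a killable cycle of even degree dz with normalizing chain automorphism σ:
    (dz : ℕ) (hdz : Even dz) (z : A) (hz : z ∈ 𝒜 dz) (hzcycle : d z = 0)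
    (σ : A ≃ₐ[k] A)
    (hσgr : ∀ m : ℕ, ∀ a ∈ 𝒜 m, σ a ∈ 𝒜 m)
    (hσz : σ z = z)
    (hσchain : ∀ a : A, σ (d a) = d (σ a))
    (hnormal : ∀ (m : ℕ), ∀ a ∈ 𝒜 m, z * a = ((-1 : ℤ) ^ (m * dz)) • (σ a * z))
    -- w = [z] is regular: the left annihilator of w in H(A) is zero
    (hreg : ∀ a : A, d a = 0 → (∃ b : A, a * z = d b) → ∃ c : A, a = d c)
    -- E = A⟨y | ∂y = z⟩ :
    (ι : A →ₐ[k] E) (hι : Function.Injective ι) (y : E)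
    (hfree : ∀ e : E, ∃! p : A × A, e = ι p.1 + ι p.2 * y)
    (hysq : y * y = 0)
    (hycomm : ∀ (m : ℕ), ∀ a ∈ 𝒜 m, y * ι a = ((-1 : ℤ) ^ m) • (ι (σ a) * y))
    (D : E →ₗ[k] E)
    (hD : ∀ (m : ℕ) (a₁ a₂ : A), a₂ ∈ 𝒜 m →
      D (ι a₁ + ι a₂ * y) = ι (d a₁) + ι (d a₂) * y + ((-1 : ℤ) ^ m) • (ι a₂ * ι z)) :
    -- (a) H(A) → H(E) is surjective:
    (∀ e : E, D e = 0 → ∃ a : A, d a = 0 ∧ ∃ e' : E, e - ι a = D e') ∧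
    -- (b) the kernel of H(A) → H(E) is w·H(A):
    (∀ a : A, d a = 0 →
      ((∃ e' : E, ι a = D e') ↔ (∃ b : A, d b = 0 ∧ ∃ a' : A, a - z * b = d a'))) :=
  homology_of_exterior_extension_general 𝒜 d hsupA hd0 hdgr hleib dz hdz z hzcycle σ hσchain hnormal
    hreg ι y hfree hycomm D hD
end
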